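/- arXiv:1801.09933 — 3 statements merged into one kernel-verified Lean document; each statement's English description precedes it below -/
import Mathlib

section
/- Fix β ∈ (0,1), α = √(1−β²), x₁, x₂ ∈ ℝ with x₁ ≠ (π/α)(1/2+k) for every integer k. Let B, Bₜ be the breather profile with parameters (β, x₁, x₂) and let K̄(x) = 4·arctan(e^{θ̄(x)}), θ̄(x) = β(x+x₂) − iα x₁, K̄ₜ(x) = −4iα e^{θ̄(x)}/(1+e^{2θ̄(x)}) be the conjugate complex kink profile. Then for all x ∈ ℝ: B′(x) − K̄ₜ(x) = (1/(β−iα))·sin((B(x)+K̄(x))/2) + (β−iα)·sin((B(x)−K̄(x))/2) and Bₜ(x) − K̄′(x) = (1/(β−iα))·sin((B(x)+K̄(x))/2) − (β−iα)·sin((B(x)−K̄(x))/2); i.e. (B, Bₜ) is a Bäcklund transform of (K̄, K̄ₜ) with complex parameter β − iα. -/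
/-!
Put φ = α x₁, w = β (x + x₂) and θ̄ = w − iφ, so that B = 4 arctan u with
u = β sin φ / (α cosh w) and K̄ = 4 arctan e^θ̄. The double-angle formulas for the complex
arctangent express sin (B/2) and cos (B/2) rationally in α, β, sin φ, cosh w, and give
sin (K̄/2) = 1 / cosh θ̄ and cos (K̄/2) = −tanh θ̄; moreover K̄′ = 2β / cosh θ̄ and
K̄ₜ = −2iα / cosh θ̄. Since 1 / (β − iα) = β + iα, the two right-hand sides are
2β sin (B/2) cos (K̄/2) + 2iα cos (B/2) sin (K̄/2) and
2β cos (B/2) sin (K̄/2) + 2iα sin (B/2) cos (K̄/2).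
After clearing denominators, the first identity is a multiple of sinh (θ̄ − w) = −i sin φ and the
second one of cosh (θ̄ + iφ) = cosh w. The nondegeneracy condition says cos φ ≠ 0, which keeps
cosh θ̄ and Re e^θ̄ away from 0.
-/

open Complex

namespace Complex

theorem tan_arctan_of_one_add_sq_ne_zero {z : ℂ} (hz : 1 + z ^ 2 ≠ 0) : tan (arctan z) = z :=
  tan_arctan (by rintro rfl; simp at hz) (by rintro rfl; simp at hz)

theorem cos_arctan_ne_zero {z : ℂ} (hz : 1 + z ^ 2 ≠ 0) : cos (arctan z) ≠ 0 := by
  intro h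
  have htan := tan_arctan_of_one_add_sq_ne_zero hz
  rw [tan_eq_sin_div_cos, h, div_zero] at htan
  subst htan
  simp [arctan] at h

theorem sin_arctan_eq_mul_cos_arctan {z : ℂ} (hz : 1 + z ^ 2 ≠ 0) :
    sin (arctan z) = z * cos (arctan z) := by
  have htan := tan_arctan_of_one_add_sq_ne_zero hz
  rwa [tan_eq_sin_div_cos, div_eq_iff (cos_arctan_ne_zero hz)] at htan

theorem cos_arctan_sq_mul_one_add_sq {z : ℂ} (hz : 1 + z ^ 2 ≠ 0) :
    cos (arctan z) ^ 2 * (1 + z ^ 2) = 1 := by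
  linear_combination sin_sq_add_cos_sq (arctan z)
    - (sin (arctan z) + z * cos (arctan z)) * sin_arctan_eq_mul_cos_arctan hz

theorem sin_two_mul_arctan {z : ℂ} (hz : 1 + z ^ 2 ≠ 0) :
    sin (2 * arctan z) = 2 * z / (1 + z ^ 2) := by
  rw [sin_two_mul, eq_div_iff hz]
  linear_combination 2 * cos (arctan z) * (1 + z ^ 2) * sin_arctan_eq_mul_cos_arctan hz
    + 2 * z * cos_arctan_sq_mul_one_add_sq hz

theorem cos_two_mul_arctan {z : ℂ} (hz : 1 + z ^ 2 ≠ 0) :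
    cos (2 * arctan z) = (1 - z ^ 2) / (1 + z ^ 2) := by
  rw [cos_two_mul, eq_div_iff hz]
  linear_combination 2 * cos_arctan_sq_mul_one_add_sq hz

theorem one_add_div_sq_ne_zero {a b : ℂ} (hb : b ≠ 0) (h : b ^ 2 + a ^ 2 ≠ 0) :
    1 + (a / b) ^ 2 ≠ 0 := by
  rw [div_pow, one_add_div (pow_ne_zero 2 hb)]
  exact div_ne_zero h (pow_ne_zero 2 hb)

theorem sin_two_mul_arctan_div {a b : ℂ} (hb : b ≠ 0) (h : b ^ 2 + a ^ 2 ≠ 0) :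
    sin (2 * arctan (a / b)) = 2 * a * b / (b ^ 2 + a ^ 2) := by
  rw [sin_two_mul_arctan (one_add_div_sq_ne_zero hb h)]
  field_simp

theorem cos_two_mul_arctan_div {a b : ℂ} (hb : b ≠ 0) (h : b ^ 2 + a ^ 2 ≠ 0) :
    cos (2 * arctan (a / b)) = (b ^ 2 - a ^ 2) / (b ^ 2 + a ^ 2) := by
  rw [cos_two_mul_arctan (one_add_div_sq_ne_zero hb h)]
  field_simp

theorem one_add_sq_eq_mul (z : ℂ) : 1 + z ^ 2 = (1 + z * I) * (1 - z * I) := by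
  linear_combination z ^ 2 * I_sq

theorem hasDerivAt_arctan {z : ℂ} (h : (1 + z * I) / (1 - z * I) ∈ slitPlane) :
    HasDerivAt arctan (1 / (1 + z ^ 2)) z := by
  have hq : (1 + z * I) / (1 - z * I) ≠ 0 := slitPlane_ne_zero h
  have h₁ : 1 + z * I ≠ 0 := by rintro h0; simp [h0] at hq
  have h₂ : 1 - z * I ≠ 0 := by rintro h0; simp [h0] at hq
  have hnum : HasDerivAt (fun w => 1 + w * I) I z := by
    simpa using ((hasDerivAt_id z).mul_const I).const_add 1
  have hden : HasDerivAt (fun w => 1 - w * I) (-I) z := by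
    simpa using ((hasDerivAt_id z).mul_const I).const_sub 1
  have hlog := ((hnum.div hden h₂).clog h).const_mul (-I / 2)
  simp only [Pi.div_apply] at hlog
  refine hlog.congr_deriv ?_
  rw [one_add_sq_eq_mul]
  field_simp
  rw [I_sq]
  ring

theorem one_add_mul_I_div_one_sub_mul_I_mem_slitPlane {z : ℂ} (hz : z.re ≠ 0) :
    (1 + z * I) / (1 - z * I) ∈ slitPlane := by
  have hden : normSq (1 - z * I) ≠ 0 := by
    rw [normSq_eq_zero.ne]; intro h0; apply hz; simpa using congrArg im h0
  refine mem_slitPlane_iff.mpr (Or.inr ?_)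
  have him : ((1 + z * I) / (1 - z * I)).im = 2 * z.re / normSq (1 - z * I) := by
    simp only [div_im, add_re, add_im, sub_re, sub_im, mul_re, mul_im, one_re, one_im, I_re, I_im]
    ring
  rw [him]
  exact div_ne_zero (mul_ne_zero two_ne_zero hz) hden

theorem one_add_exp_sq (z : ℂ) : 1 + exp z ^ 2 = 2 * exp z * cosh z := by
  rw [cosh, exp_neg]; field_simp; ring

theorem one_sub_exp_sq (z : ℂ) : 1 - exp z ^ 2 = -(2 * exp z * sinh z) := by
  rw [sinh, exp_neg]; field_simp; ring

theorem exp_div_one_add_exp_sq (z : ℂ) : exp z / (1 + exp z ^ 2) = 1 / (2 * cosh z) := by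
  rw [one_add_exp_sq, mul_comm 2, mul_assoc, div_mul_cancel_left₀ (exp_ne_zero z), one_div]

theorem one_add_exp_sq_ne_zero {z : ℂ} (h : cosh z ≠ 0) : 1 + exp z ^ 2 ≠ 0 := by
  rw [one_add_exp_sq]; exact mul_ne_zero (mul_ne_zero two_ne_zero (exp_ne_zero z)) h

theorem sin_two_mul_arctan_exp {z : ℂ} (h : cosh z ≠ 0) :
    sin (2 * arctan (exp z)) = 1 / cosh z := by
  rw [sin_two_mul_arctan (one_add_exp_sq_ne_zero h), one_add_exp_sq]
  field_simp

theorem cos_two_mul_arctan_exp {z : ℂ} (h : cosh z ≠ 0) :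
    cos (2 * arctan (exp z)) = -tanh z := by
  rw [cos_two_mul_arctan (one_add_exp_sq_ne_zero h), one_sub_exp_sq, one_add_exp_sq,
    tanh_eq_sinh_div_cosh]
  field_simp

theorem _root_.HasDerivAt.four_mul_arctan_exp {f : ℝ → ℂ} {f' : ℂ} {x : ℝ}
    (hf : HasDerivAt f f' x) (h : (exp (f x)).re ≠ 0) :
    HasDerivAt (fun y => 4 * arctan (exp (f y))) (2 * f' / cosh (f x)) x := by
  refine (((hasDerivAt_arctan (one_add_mul_I_div_one_sub_mul_I_mem_slitPlane h)).comp x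
    hf.cexp).const_mul 4).congr_deriv ?_
  calc 4 * (1 / (1 + exp (f x) ^ 2) * (exp (f x) * f'))
      = 4 * f' * (exp (f x) / (1 + exp (f x) ^ 2)) := by ring
    _ = 2 * f' / cosh (f x) := by rw [exp_div_one_add_exp_sq]; ring

theorem cosh_sub_mul_I_ne_zero {w φ : ℝ} (h : Real.cos φ ≠ 0) : cosh (w - φ * I) ≠ 0 := by
  have hre : (cosh (w - φ * I)).re = Real.cosh w * Real.cos φ := by
    simp [cosh_sub, cosh_mul_I, sinh_mul_I, ← ofReal_cosh, ← ofReal_cos]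
  intro h0
  rw [h0, zero_re, eq_comm] at hre
  exact mul_ne_zero (Real.cosh_pos w).ne' h hre

end Complex

theorem hasDerivAt_four_mul_arctan_div_cosh (a α β x₂ x : ℝ) (hα : α ≠ 0) :
    HasDerivAt (fun y => 4 * Real.arctan (a / (α * Real.cosh (β * (y + x₂)))))
      (-(4 * a * α * β * Real.sinh (β * (x + x₂)))
        / (α ^ 2 * Real.cosh (β * (x + x₂)) ^ 2 + a ^ 2)) x := by
  have hw : HasDerivAt (fun y : ℝ => β * (y + x₂)) β x := by
    simpa using ((hasDerivAt_id x).add_const x₂).const_mul β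
  have hden : α * Real.cosh (β * (x + x₂)) ≠ 0 := mul_ne_zero hα (Real.cosh_pos _).ne'
  refine ((((hasDerivAt_const x a).div
    (((Real.hasDerivAt_cosh _).comp x hw).const_mul α) hden).arctan).const_mul 4).congr_deriv ?_
  simp only [Function.comp_def, Pi.div_apply]
  field_simp
  ring

theorem one_div_sub_mul_I {α β : ℝ} (h : α ^ 2 + β ^ 2 = 1) :
    1 / ((β : ℂ) - I * α) = β + I * α := by
  have hmul : ((β : ℂ) - I * α) * (β + I * α) = 1 := by
    linear_combination (by exact_mod_cast h : (α : ℂ) ^ 2 + β ^ 2 = 1) - (α : ℂ) ^ 2 * I_sq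
  rw [eq_comm, eq_div_iff (left_ne_zero_of_mul_eq_one hmul), mul_comm, hmul]

theorem breather_conjugateKink_backlund_pointwise {α β φ w B B' Bt : ℝ} {θ K K' Kt : ℂ}
    (hα : α ≠ 0) (hαβ : α ^ 2 + β ^ 2 = 1) (hφ : Real.cos φ ≠ 0)
    (hB : B = 4 * Real.arctan (β * Real.sin φ / (α * Real.cosh w)))
    (hB' : B' = -(4 * (β * Real.sin φ) * α * β * Real.sinh w)
      / (α ^ 2 * Real.cosh w ^ 2 + (β * Real.sin φ) ^ 2))
    (hBt : Bt = 4 * α ^ 2 * β * Real.cos φ * Real.cosh w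
      / (α ^ 2 * Real.cosh w ^ 2 + β ^ 2 * Real.sin φ ^ 2))
    (hθ : θ = w - φ * I) (hK : K = 4 * arctan (exp θ)) (hK' : K' = 2 * β / cosh θ)
    (hKt : Kt = -4 * I * α * exp θ / (1 + exp (2 * θ))) :
    ((B' : ℂ) - Kt = 1 / ((β : ℂ) - I * α) * sin ((B + K) / 2)
        + ((β : ℂ) - I * α) * sin ((B - K) / 2)) ∧
    ((Bt : ℂ) - K' = 1 / ((β : ℂ) - I * α) * sin ((B + K) / 2)
        - ((β : ℂ) - I * α) * sin ((B - K) / 2)) := by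
  have hcosh : cosh θ ≠ 0 := hθ ▸ cosh_sub_mul_I_ne_zero hφ
  have hsinh_sub : sinh θ * Real.cosh w - cosh θ * Real.sinh w = -(Real.sin φ * I) := by
    rw [ofReal_cosh, ofReal_sinh, ofReal_sin, ← sinh_sub, hθ, sub_sub_cancel_left, sinh_neg,
      sinh_mul_I]
  have hcosh_add : cosh θ * Real.cos φ + sinh θ * (Real.sin φ * I) = Real.cosh w := by
    rw [ofReal_cosh, ofReal_cos, ofReal_sin, ← sinh_mul_I, ← cosh_mul_I, ← cosh_add, hθ,
      sub_add_cancel]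
  have hKt' : Kt = -2 * I * α / cosh θ := by
    rw [hKt, two_mul, exp_add, ← sq, mul_div_assoc, exp_div_one_add_exp_sq]; ring
  have hch_pos := Real.cosh_pos w
  -- opaque names stop `push_cast` from turning `↑(Real.cos φ)` into `cos ↑φ` below
  set s := Real.sin φ
  set c := Real.cos φ
  set ch := Real.cosh w
  set sh := Real.sinh w
  have hαch : (α : ℂ) * ch ≠ 0 := by exact_mod_cast mul_ne_zero hα hch_pos.ne'
  have hD : (α : ℂ) ^ 2 * ch ^ 2 + β ^ 2 * s ^ 2 ≠ 0 := by
    exact_mod_cast (by positivity : 0 < α ^ 2 * ch ^ 2 + β ^ 2 * s ^ 2).ne'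
  have hD' : ((α : ℂ) * ch) ^ 2 + (β * s) ^ 2 ≠ 0 := by rwa [mul_pow, mul_pow]
  have hsum : ((B : ℂ) + K) / 2 = 2 * arctan (β * s / (α * ch)) + 2 * arctan (exp θ) := by
    rw [hB, hK]; push_cast [ofReal_arctan]; ring
  have hdiff : ((B : ℂ) - K) / 2 = 2 * arctan (β * s / (α * ch)) - 2 * arctan (exp θ) := by
    rw [hB, hK]; push_cast [ofReal_arctan]; ring
  rw [hsum, hdiff, sin_add, sin_sub, sin_two_mul_arctan_div hαch hD',
    cos_two_mul_arctan_div hαch hD', sin_two_mul_arctan_exp hcosh, cos_two_mul_arctan_exp hcosh,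
    tanh_eq_sinh_div_cosh, one_div_sub_mul_I hαβ]
  constructor
  · rw [hB', hKt']
    push_cast
    linear_combination (norm := skip)
      (4 * α * β ^ 2 * s / ((α ^ 2 * ch ^ 2 + β ^ 2 * s ^ 2) * cosh θ)) * hsinh_sub
    field_simp
    ring
  · rw [hBt, hK']
    push_cast
    linear_combination (norm := skip)
      (4 * α ^ 2 * β * ch / ((α ^ 2 * ch ^ 2 + β ^ 2 * s ^ 2) * cosh θ)) * hcosh_add
    field_simp
    ring

/-- **The breather as a Bäcklund transform of the conjugate complex kink (Corollary 4.5).**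
For `β ∈ (0,1)`, `α = √(1−β²)`, and nondegenerate `x₁`, the breather profile `(B, Bₜ)`
and the conjugate complex kink profile `(K̄, K̄ₜ)` with the same parameters satisfy the
Bäcklund equations with complex parameter `β − iα`. -/
theorem breather_backlund_of_conjugate_kink (β x₁ x₂ : ℝ) (hβ0 : 0 < β) (hβ1 : β < 1)
    (α : ℝ) (hα : α = Real.sqrt (1 - β ^ 2))
    (hx₁ : ∀ k : ℤ, x₁ ≠ (Real.pi / α) * (1 / 2 + (k : ℝ)))
    (B Bt : ℝ → ℝ)
    (hB : ∀ x : ℝ, B x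
      = 4 * Real.arctan (β * Real.sin (α * x₁) / (α * Real.cosh (β * (x + x₂)))))
    (hBt : ∀ x : ℝ, Bt x
      = 4 * α ^ 2 * β * Real.cos (α * x₁) * Real.cosh (β * (x + x₂))
          / (α ^ 2 * (Real.cosh (β * (x + x₂))) ^ 2 + β ^ 2 * (Real.sin (α * x₁)) ^ 2))
    (θbar : ℝ → ℂ)
    (hθbar : ∀ x : ℝ, θbar x
      = (β : ℂ) * ((x : ℂ) + (x₂ : ℂ)) - Complex.I * (α : ℂ) * (x₁ : ℂ))
    (Kbar Kbart : ℝ → ℂ)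
    (hKbar : ∀ x : ℝ, Kbar x = 4 * Complex.arctan (Complex.exp (θbar x)))
    (hKbart : ∀ x : ℝ, Kbart x
      = -4 * Complex.I * (α : ℂ) * Complex.exp (θbar x) / (1 + Complex.exp (2 * θbar x))) :
    (∀ x : ℝ, ((deriv B x : ℝ) : ℂ) - Kbart x
      = (1 / ((β : ℂ) - Complex.I * (α : ℂ))) * Complex.sin (((B x : ℂ) + Kbar x) / 2)
        + ((β : ℂ) - Complex.I * (α : ℂ)) * Complex.sin (((B x : ℂ) - Kbar x) / 2)) ∧
    (∀ x : ℝ, (Bt x : ℂ) - deriv Kbar x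
      = (1 / ((β : ℂ) - Complex.I * (α : ℂ))) * Complex.sin (((B x : ℂ) + Kbar x) / 2)
        - ((β : ℂ) - Complex.I * (α : ℂ)) * Complex.sin (((B x : ℂ) - Kbar x) / 2)) := by
  have hβ2 : 0 < 1 - β ^ 2 := by nlinarith
  have hα0 : 0 < α := hα ▸ Real.sqrt_pos.mpr hβ2
  have hαβ : α ^ 2 + β ^ 2 = 1 := by rw [hα, Real.sq_sqrt hβ2.le]; ring
  have hcos : Real.cos (α * x₁) ≠ 0 := Real.cos_ne_zero_iff.mpr fun k hk =>
    hx₁ k (by rw [div_mul_eq_mul_div, eq_div_iff hα0.ne']; linear_combination hk)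
  have hθ : ∀ x : ℝ, θbar x = (β * (x + x₂) : ℝ) - (α * x₁ : ℝ) * I := fun x => by
    rw [hθbar]; push_cast; ring
  have hθ' : ∀ x : ℝ, HasDerivAt θbar β x := fun x => by
    rw [funext hθbar]
    simpa using
      (((hasDerivAt_id x).ofReal_comp.add_const (x₂ : ℂ)).const_mul (β : ℂ)).sub_const (I * α * x₁)
  have hre : ∀ x : ℝ, (exp (θbar x)).re ≠ 0 := fun x => by
    rw [exp_re, hθ]
    simpa using mul_ne_zero (Real.exp_pos (β * (x + x₂))).ne' hcos
  have hB' : ∀ x : ℝ, HasDerivAt B _ x := fun x => by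
    rw [funext hB]; exact hasDerivAt_four_mul_arctan_div_cosh _ α β x₂ x hα0.ne'
  have hKbar' : ∀ x : ℝ, HasDerivAt Kbar _ x := fun x => by
    rw [funext hKbar]; exact (hθ' x).four_mul_arctan_exp (hre x)
  have key := fun x => breather_conjugateKink_backlund_pointwise hα0.ne' hαβ hcos (hB x)
    (hB' x).deriv (hBt x) (hθ x) (hKbar x) (hKbar' x).deriv (hKbart x)
  exact ⟨fun x => (key x).1, fun x => (key x).2⟩
end

section
/- Fix β real with 0 < |β| < 1, γ = (1−β²)^{−1/2}, x₁, x₂ ∈ ℝ. Let R, Rₜ be the 2-kink profile with parameters (β, x₁, x₂), and let Q̃(x) = 4·arctan(e^{γ(x+x₁+x₂)}) with Q̃ₜ(x) = 2βγ·sech(γ(x+x₁+x₂)) (the real kink profile of speed −β and shift x₁+x₂). Set a₃ = −a(β) = −√((1+β)/(1−β)). Then: (1) lim_{x→+∞} cos((R(x)+Q̃(x))/2) = 1, lim_{x→−∞} cos((R(x)+Q̃(x))/2) = −1, lim_{x→+∞} cos((R(x)−Q̃(x))/2) = 1, lim_{x→−∞} cos((R(x)−Q̃(x))/2) = −1; (2)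 for all x ∈ ℝ: R′(x) − Q̃ₜ(x) = (1/a₃)·sin((R(x)+Q̃(x))/2) + a₃·sin((R(x)−Q̃(x))/2) and Rₜ(x) − Q̃′(x) = (1/a₃)·sin((R(x)+Q̃(x))/2) − a₃·sin((R(x)−Q̃(x))/2); i.e. (R, Rₜ) is a Bäcklund transform of (Q̃, Q̃ₜ) with parameter −a(β). -/
/-! Put `u = γ (x + x₂)`, `s = γ x₁`, `A = β sinh u / cosh s`, `θ = 2 arctan A` and
`φ = 2 arctan (exp (u + s))`, so that `(R ± Q̃) / 2 = θ ± φ`, with `sin φ = sech (u + s)` and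
`cos φ = -tanh (u + s)`.

Limits: `|A| → ∞` at both ends because `β ≠ 0`, so `θ → ±π` and `cos (θ ± φ) → -cos (lim φ)`;
and `φ → π` at `+∞`, `φ → 0` at `-∞`.

Bäcklund equations: `γ² (1 - β²) = 1` gives `a₃ = -(1 + β) γ` and `1 / a₃ = (β - 1) γ`. After
clearing denominators, the two equations reduce to the addition formula for `cosh (u + s)` and
`cosh² - sinh² = 1`. -/

open Filter Topology Real

namespace Real

theorem sin_two_mul_arctan (x : ℝ) : sin (2 * arctan x) = 2 * x / (1 + x ^ 2) := by
  have h : 0 < 1 + x ^ 2 := by positivity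
  rw [sin_two_mul, sin_arctan, cos_arctan]
  field_simp
  rw [sq_sqrt h.le]

theorem cos_two_mul_arctan (x : ℝ) : cos (2 * arctan x) = (1 - x ^ 2) / (1 + x ^ 2) := by
  have h : 0 < 1 + x ^ 2 := by positivity
  rw [cos_two_mul, cos_arctan, div_pow, sq_sqrt h.le]
  field_simp
  ring

theorem sin_two_mul_arctan_exp (t : ℝ) : sin (2 * arctan (exp t)) = (cosh t)⁻¹ := by
  rw [sin_two_mul_arctan, cosh_eq, exp_neg]
  field_simp
  ring

theorem cos_two_mul_arctan_exp (t : ℝ) : cos (2 * arctan (exp t)) = -tanh t := by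
  rw [cos_two_mul_arctan, tanh_eq_sinh_div_cosh, sinh_eq, cosh_eq, exp_neg]
  field_simp
  ring

theorem tendsto_two_mul_arctan_atTop : Tendsto (fun t => 2 * arctan t) atTop (𝓝 π) := by
  simpa [show 2 * (π / 2) = π by ring] using
    (tendsto_arctan_atTop.mono_right nhdsWithin_le_nhds).const_mul 2

theorem tendsto_two_mul_arctan_atBot : Tendsto (fun t => 2 * arctan t) atBot (𝓝 (-π)) := by
  simpa [show 2 * (π / 2) = π by ring] using
    (tendsto_arctan_atBot.mono_right nhdsWithin_le_nhds).const_mul 2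

theorem tendsto_cos_two_mul_arctan_cocompact :
    Tendsto (fun t => cos (2 * arctan t)) (cocompact ℝ) (𝓝 (-1)) := by
  rw [cocompact_eq_atBot_atTop, tendsto_sup]
  constructor
  · simpa [Function.comp_def] using (continuous_cos.tendsto _).comp tendsto_two_mul_arctan_atBot
  · simpa [Function.comp_def] using (continuous_cos.tendsto _).comp tendsto_two_mul_arctan_atTop

theorem tendsto_sin_two_mul_arctan_cocompact :
    Tendsto (fun t => sin (2 * arctan t)) (cocompact ℝ) (𝓝 0) := by
  rw [cocompact_eq_atBot_atTop, tendsto_sup]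
  constructor
  · simpa [Function.comp_def] using (continuous_sin.tendsto _).comp tendsto_two_mul_arctan_atBot
  · simpa [Function.comp_def] using (continuous_sin.tendsto _).comp tendsto_two_mul_arctan_atTop

end Real

theorem rpow_neg_one_half_sq_mul_self {x : ℝ} (hx : 0 < x) :
    (x ^ (-(1 / 2 : ℝ))) ^ 2 * x = 1 := by
  rw [← rpow_natCast, ← rpow_mul hx.le, ← rpow_add_one hx.ne']
  norm_num

theorem sqrt_one_add_div_one_sub {β γ : ℝ} (hβ : -1 ≤ β) (hγ0 : 0 ≤ γ)
    (hγ : γ ^ 2 * (1 - β ^ 2) = 1) : √((1 + β) / (1 - β)) = (1 + β) * γ := by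
  have hβ1 : 0 < 1 - β := by
    have : 0 < 1 - β ^ 2 := pos_of_mul_pos_right (hγ.symm ▸ one_pos) (sq_nonneg γ)
    nlinarith
  rw [sqrt_eq_iff_mul_self_eq (div_nonneg (by linarith) hβ1.le) (mul_nonneg (by linarith) hγ0),
    div_eq_iff hβ1.ne']
  linear_combination -(1 + β) * hγ

theorem one_div_neg_one_add_mul {β γ : ℝ} (hγ : γ ^ 2 * (1 - β ^ 2) = 1) :
    1 / -((1 + β) * γ) = (β - 1) * γ := by
  have h : ((1 + β) * γ) * ((1 - β) * γ) = 1 := by linear_combination hγ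
  rw [div_eq_iff (neg_ne_zero.mpr (left_ne_zero_of_mul_eq_one h))]
  linear_combination -hγ

theorem tendsto_mul_sinh_cocompact {c γ : ℝ} (hc : c ≠ 0) (hγ : γ ≠ 0) (x₀ : ℝ) :
    Tendsto (fun x => c * sinh (γ * (x + x₀))) (cocompact ℝ) (cocompact ℝ) :=
  (tendsto_cocompact_mul_left₀ hc).comp <|
    sinhHomeomorph.isClosedEmbedding.tendsto_cocompact.comp <| (tendsto_cocompact_mul_left₀ hγ).comp
      (Homeomorph.addRight x₀).isClosedEmbedding.tendsto_cocompact

theorem tendsto_cos_two_mul_arctan_add {α : Type*} {l : Filter α} {A φ : α → ℝ} {φ₀ : ℝ}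
    (hA : Tendsto A l (cocompact ℝ)) (hφ : Tendsto φ l (𝓝 φ₀)) :
    Tendsto (fun x => cos (2 * arctan (A x) + φ x)) l (𝓝 (-cos φ₀)) := by
  have h := ((tendsto_cos_two_mul_arctan_cocompact.comp hA).mul
    ((continuous_cos.tendsto _).comp hφ)).sub
    ((tendsto_sin_two_mul_arctan_cocompact.comp hA).mul ((continuous_sin.tendsto _).comp hφ))
  simpa only [cos_add, Function.comp_def, neg_one_mul, zero_mul, sub_zero] using h

theorem tendsto_two_mul_arctan_exp_mul_add_atTop {γ : ℝ} (hγ : 0 < γ) (c : ℝ) :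
    Tendsto (fun x => 2 * arctan (exp (γ * (x + c)))) atTop (𝓝 π) :=
  tendsto_two_mul_arctan_atTop.comp <| tendsto_exp_atTop.comp <|
    (tendsto_atTop_add_const_right _ c tendsto_id).const_mul_atTop hγ

theorem tendsto_two_mul_arctan_exp_mul_add_atBot {γ : ℝ} (hγ : 0 < γ) (c : ℝ) :
    Tendsto (fun x => 2 * arctan (exp (γ * (x + c)))) atBot (𝓝 0) := by
  have h := (continuous_arctan.tendsto 0).comp <| tendsto_exp_atBot.comp <|
    (tendsto_atBot_add_const_right _ c tendsto_id).const_mul_atBot hγ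
  simpa [Function.comp_def] using h.const_mul 2

theorem hasDerivAt_four_arctan_exp_mul_add (γ c x : ℝ) :
    HasDerivAt (fun x => 4 * arctan (exp (γ * (x + c))))
      (2 * γ * (cosh (γ * (x + c)))⁻¹) x := by
  have h : HasDerivAt (fun x => γ * (x + c)) γ x := by
    simpa using ((hasDerivAt_id x).add_const c).const_mul γ
  refine (h.exp.arctan.const_mul 4).congr_deriv ?_
  rw [cosh_eq, exp_neg]
  field_simp
  ring

theorem hasDerivAt_four_arctan_mul_sinh_div (β γ c d x : ℝ) :
    HasDerivAt (fun x => 4 * arctan (β * sinh (γ * (x + c)) / cosh d))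
      (4 * β * γ * cosh (γ * (x + c)) * cosh d
        / (cosh d ^ 2 + β ^ 2 * sinh (γ * (x + c)) ^ 2)) x := by
  have h : HasDerivAt (fun x => γ * (x + c)) γ x := by
    simpa using ((hasDerivAt_id x).add_const c).const_mul γ
  refine (((h.sinh.const_mul β).div_const (cosh d)).arctan.const_mul 4).congr_deriv ?_
  have := cosh_pos d
  field_simp

theorem sin_two_mul_arctan_add_two_mul_arctan_exp (A v : ℝ) :
    sin (2 * arctan A + 2 * arctan (exp v))
      = (1 - A ^ 2 - 2 * A * sinh v) / ((1 + A ^ 2) * cosh v) := by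
  rw [sin_add, sin_two_mul_arctan_exp, cos_two_mul_arctan_exp, sin_two_mul_arctan,
    cos_two_mul_arctan, tanh_eq_sinh_div_cosh]
  have := cosh_pos v
  field_simp
  ring

theorem sin_two_mul_arctan_sub_two_mul_arctan_exp (A v : ℝ) :
    sin (2 * arctan A - 2 * arctan (exp v))
      = -(1 - A ^ 2 + 2 * A * sinh v) / ((1 + A ^ 2) * cosh v) := by
  rw [sin_sub, sin_two_mul_arctan_exp, cos_two_mul_arctan_exp, sin_two_mul_arctan,
    cos_two_mul_arctan, tanh_eq_sinh_div_cosh]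
  have := cosh_pos v
  field_simp
  ring

theorem two_kink_backlund_space {β γ : ℝ} (hγ : γ ^ 2 * (1 - β ^ 2) = 1) (u s : ℝ) :
    4 * β * γ * cosh u * cosh s / (cosh s ^ 2 + β ^ 2 * sinh u ^ 2)
        - 2 * β * γ * (cosh (u + s))⁻¹
      = 1 / -((1 + β) * γ) * sin (2 * arctan (β * sinh u / cosh s) + 2 * arctan (exp (u + s)))
        + -((1 + β) * γ) * sin (2 * arctan (β * sinh u / cosh s) - 2 * arctan (exp (u + s))) := by
  rw [one_div_neg_one_add_mul hγ, sin_two_mul_arctan_add_two_mul_arctan_exp,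
    sin_two_mul_arctan_sub_two_mul_arctan_exp, sinh_add]
  have hs := cosh_pos s
  have hus := cosh_pos (u + s)
  field_simp
  linear_combination
    4 * β * γ * cosh s * (cosh u * cosh_add u s + cosh s * cosh_sq_sub_sinh_sq u)

theorem two_kink_backlund_time {β γ : ℝ} (hγ : γ ^ 2 * (1 - β ^ 2) = 1) (u s : ℝ) :
    -4 * β ^ 2 * γ * sinh u * sinh s / (cosh s ^ 2 + β ^ 2 * sinh u ^ 2)
        - 2 * γ * (cosh (u + s))⁻¹
      = 1 / -((1 + β) * γ) * sin (2 * arctan (β * sinh u / cosh s) + 2 * arctan (exp (u + s)))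
        - -((1 + β) * γ) * sin (2 * arctan (β * sinh u / cosh s) - 2 * arctan (exp (u + s))) := by
  rw [one_div_neg_one_add_mul hγ, sin_two_mul_arctan_add_two_mul_arctan_exp,
    sin_two_mul_arctan_sub_two_mul_arctan_exp, sinh_add]
  have hs := cosh_pos s
  have hus := cosh_pos (u + s)
  field_simp
  linear_combination
    4 * β ^ 2 * γ * sinh u * (sinh u * cosh_sq_sub_sinh_sq s - sinh s * cosh_add u s)

/-- **The 2-kink as a Bäcklund transform of a real kink (Corollary 4.7).**
For `0 < |β| < 1`, `γ = (1−β²)^{-1/2}`, the 2-kink profile `(R, Rₜ)` and the real kink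
profile `Q̃` of speed `−β` and shift `x₁+x₂` satisfy `cos((R±Q̃)/2) → 1` at `+∞` and
`→ −1` at `−∞`, and the Bäcklund equations with parameter `a₃ = −√((1+β)/(1−β))`. -/
theorem two_kink_backlund_of_kink (β x₁ x₂ : ℝ) (hβ0 : 0 < |β|) (hβ1 : |β| < 1)
    (γ : ℝ) (hγ : γ = (1 - β ^ 2) ^ (-(1 / 2 : ℝ)))
    (R Rt : ℝ → ℝ)
    (hR : ∀ x : ℝ, R x
      = 4 * Real.arctan (β * Real.sinh (γ * (x + x₂)) / Real.cosh (γ * x₁)))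
    (hRt : ∀ x : ℝ, Rt x
      = -4 * β ^ 2 * γ * Real.sinh (γ * (x + x₂)) * Real.sinh (γ * x₁)
          / ((Real.cosh (γ * x₁)) ^ 2 + β ^ 2 * (Real.sinh (γ * (x + x₂))) ^ 2))
    (Q Qt : ℝ → ℝ)
    (hQ : ∀ x : ℝ, Q x = 4 * Real.arctan (Real.exp (γ * (x + x₁ + x₂))))
    (hQt : ∀ x : ℝ, Qt x = 2 * β * γ * (Real.cosh (γ * (x + x₁ + x₂)))⁻¹)
    (a₃ : ℝ) (ha₃ : a₃ = -Real.sqrt ((1 + β) / (1 - β))) :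
    -- (1) limits at ±∞
    (Tendsto (fun x : ℝ => Real.cos ((R x + Q x) / 2)) atTop (nhds 1)) ∧
    (Tendsto (fun x : ℝ => Real.cos ((R x + Q x) / 2)) atBot (nhds (-1))) ∧
    (Tendsto (fun x : ℝ => Real.cos ((R x - Q x) / 2)) atTop (nhds 1)) ∧
    (Tendsto (fun x : ℝ => Real.cos ((R x - Q x) / 2)) atBot (nhds (-1))) ∧
    -- (2) Bäcklund equations with parameter a₃ = −a(β)
    (∀ x : ℝ, deriv R x - Qt x
      = (1 / a₃) * Real.sin ((R x + Q x) / 2) + a₃ * Real.sin ((R x - Q x) / 2)) ∧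
    (∀ x : ℝ, Rt x - deriv Q x
      = (1 / a₃) * Real.sin ((R x + Q x) / 2) - a₃ * Real.sin ((R x - Q x) / 2)) := by
  have h1β : 0 < 1 - β ^ 2 := sub_pos.mpr ((sq_lt_one_iff_abs_lt_one β).mpr hβ1)
  have hγpos : 0 < γ := hγ ▸ rpow_pos_of_pos h1β _
  have hγβ : γ ^ 2 * (1 - β ^ 2) = 1 := hγ ▸ rpow_neg_one_half_sq_mul_self h1β
  have ha : a₃ = -((1 + β) * γ) := by
    rw [ha₃, sqrt_one_add_div_one_sub (abs_lt.mp hβ1).1.le hγpos.le hγβ]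
  have hQ' : ∀ x, Q x = 4 * arctan (exp (γ * (x + (x₁ + x₂)))) := fun x => by
    rw [hQ, add_assoc]
  have hsum : ∀ x, (R x + Q x) / 2
      = 2 * arctan (β * sinh (γ * (x + x₂)) / cosh (γ * x₁))
        + 2 * arctan (exp (γ * (x + (x₁ + x₂)))) := fun x => by rw [hR, hQ']; ring
  have hdiff : ∀ x, (R x - Q x) / 2
      = 2 * arctan (β * sinh (γ * (x + x₂)) / cosh (γ * x₁))
        - 2 * arctan (exp (γ * (x + (x₁ + x₂)))) := fun x => by rw [hR, hQ']; ring
  have hA : Tendsto (fun x => β * sinh (γ * (x + x₂)) / cosh (γ * x₁))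
      (cocompact ℝ) (cocompact ℝ) :=
    (tendsto_mul_sinh_cocompact (div_ne_zero (abs_pos.mp hβ0) (cosh_pos _).ne') hγpos.ne'
      x₂).congr fun x => by ring
  have hkinkTop := tendsto_two_mul_arctan_exp_mul_add_atTop hγpos (x₁ + x₂)
  have hkinkBot := tendsto_two_mul_arctan_exp_mul_add_atBot hγpos (x₁ + x₂)
  have hshift : ∀ x, γ * (x + (x₁ + x₂)) = γ * (x + x₂) + γ * x₁ := fun x => by ring
  refine ⟨?_, ?_, ?_, ?_, fun x => ?_, fun x => ?_⟩
  · simpa only [hsum, cos_pi, neg_neg] using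
      tendsto_cos_two_mul_arctan_add (hA.mono_left atTop_le_cocompact) hkinkTop
  · simpa only [hsum, cos_zero] using
      tendsto_cos_two_mul_arctan_add (hA.mono_left atBot_le_cocompact) hkinkBot
  · simp only [hdiff]
    simpa only [sub_eq_add_neg, cos_neg, cos_pi, neg_neg] using
      tendsto_cos_two_mul_arctan_add (hA.mono_left atTop_le_cocompact) hkinkTop.neg
  · simp only [hdiff]
    simpa only [sub_eq_add_neg, neg_zero, cos_zero] using
      tendsto_cos_two_mul_arctan_add (hA.mono_left atBot_le_cocompact) hkinkBot.neg
  · have hdR := (hasDerivAt_four_arctan_mul_sinh_div β γ x₂ (γ * x₁) x).deriv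
    rw [← funext hR] at hdR
    rw [hdR, hQt, add_assoc x x₁ x₂, hsum, hdiff, ha, hshift]
    exact two_kink_backlund_space hγβ _ _
  · have hdQ := (hasDerivAt_four_arctan_exp_mul_add γ (x₁ + x₂) x).deriv
    rw [← funext hQ'] at hdQ
    rw [hdQ, hRt, hsum, hdiff, ha, hshift]
    exact two_kink_backlund_time hγβ _ _
end

section
/- Fix β real with 0 < |β| < 1, α = √(1−β²), x₁, x₂ ∈ ℝ with x₁ ≠ (π/α)(1/2+k) for every integer k. Let B, Bₜ be the breather profile with parameters (β, x₁, x₂), K the complex kink profile and K̄ the conjugate complex kink profile with the same parameters. Then: (i) for all x ∈ ℝ, K(x) − K̄(x) = 4·arctan(i·sin(α x₁)/cosh(β(x+x₂))), where arctan is the principal complex arctangent (the argument has modulus < 1, hence avoids the branch cuts); (ii) for all x ∈ ℝ, 1/cos²(B(x)/4) = 1 + (β sin(α x₁)/(α cosh(β(x+x₂))))² and tan²(B(x)/4) = (β sin(α x₁)/(α cosh(β(x+x₂))))²; moreover, for every ℓ ∈ ℂ and every x ∈ ℝ such that α² cosh²(β(x+x₂)) + ℓ² β² sin²(α x₁) ≠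 0: Bₜ(x)·(1/cos²(B(x)/4))/(1 + ℓ²·tan²(B(x)/4)) = 4α²β cos(α x₁) cosh(β(x+x₂))/(α² cosh²(β(x+x₂)) + ℓ² β² sin²(α x₁)). -/
/-!
With `u = exp (a + b i)` and `v = exp (a - b i) = conj u`, the kink difference is
`arctan u - arctan v`, and the tangent subtraction formula predicts
`arctan ((u - v) / (1 + u v)) = arctan (i sin b / cosh a)`. Both sides have the same image
under `z ↦ exp (2 i z)`, so they differ by a multiple of `π`; the real parts agree because
`Re (arctan (conj z)) = Re (arctan z)` for every `z`, while `arctan` of `i r` with `|r| < 1` is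
purely imaginary. Nondegeneracy (`cos b ≠ 0`) keeps `u`, `v` and `i sin b / cosh a` off `± i`.
The identities for `B` are trigonometry of `arctan` followed by clearing denominators.
-/

open Complex ComplexConjugate

lemma cos_mul_ne_zero_of_forall_ne {α x : ℝ} (h : ∀ k : ℤ, x ≠ Real.pi / α * (1 / 2 + k)) :
    Real.cos (α * x) ≠ 0 := by
  rcases eq_or_ne α 0 with rfl | hα
  · simp
  rw [ne_eq, Real.cos_eq_zero_iff]
  rintro ⟨k, hk⟩
  refine h k ?_
  field_simp
  linarith

lemma abs_sin_div_cosh_lt_one {a b : ℝ} (hb : Real.cos b ≠ 0) :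
    |Real.sin b / Real.cosh a| < 1 := by
  have hsin : |Real.sin b| < 1 := by
    rw [← sq_lt_one_iff_abs_lt_one, ← Real.sin_sq_add_cos_sq b, lt_add_iff_pos_right]
    positivity
  rw [abs_div, abs_of_pos (Real.cosh_pos a), div_lt_one (Real.cosh_pos a)]
  linarith [Real.one_le_cosh a]

namespace Complex

lemma one_add_mul_I_ne_zero {z : ℂ} (h : z ≠ I) : 1 + z * I ≠ 0 :=
  fun h' ↦ h (by linear_combination -I * h' + z * I_sq)

lemma one_sub_mul_I_ne_zero {z : ℂ} (h : z ≠ -I) : 1 - z * I ≠ 0 :=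
  fun h' ↦ h (by linear_combination I * h' + z * I_sq)

lemma exp_two_mul_I_mul_arctan {z : ℂ} (h₁ : z ≠ I) (h₂ : z ≠ -I) :
    exp (2 * I * arctan z) = (1 + z * I) / (1 - z * I) := by
  rw [arctan, show 2 * I * (-I / 2 * log ((1 + z * I) / (1 - z * I)))
      = -(I * I) * log ((1 + z * I) / (1 - z * I)) by ring, I_mul_I, neg_neg, one_mul,
    exp_log (div_ne_zero (one_add_mul_I_ne_zero h₁) (one_sub_mul_I_ne_zero h₂))]

lemma re_arctan (z : ℂ) : (arctan z).re = arg ((1 + z * I) / (1 - z * I)) / 2 := by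
  simp only [arctan, mul_re, div_ofNat_re, neg_re, I_re, neg_zero, zero_div, log_re, zero_mul,
    div_ofNat_im, neg_im, I_im, log_im, zero_sub]
  ring

lemma arg_inv_conj (w : ℂ) : arg (conj w)⁻¹ = arg w := by
  rcases eq_or_ne w 0 with rfl | hw
  · simp
  rw [inv_def, conj_conj, normSq_conj]
  exact arg_mul_real (inv_pos.2 (normSq_pos.2 hw)) w

lemma re_arctan_conj (z : ℂ) : (arctan (conj z)).re = (arctan z).re := by
  rw [re_arctan, re_arctan, ← arg_inv_conj ((1 + z * I) / (1 - z * I)), map_div₀, inv_div]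
  simp only [map_sub, map_add, map_one, map_mul, conj_I, mul_neg, sub_neg_eq_add,
    ← sub_eq_add_neg]

lemma re_arctan_ofReal_mul_I {r : ℝ} (hr : |r| < 1) : (arctan (r * I)).re = 0 := by
  obtain ⟨h₁, h₂⟩ := abs_lt.mp hr
  have hW : (1 + (r : ℂ) * I * I) / (1 - r * I * I) = ((1 - r) / (1 + r) : ℝ) := by
    push_cast; rw [mul_assoc, I_mul_I]; ring
  rw [re_arctan, hW, arg_ofReal_of_nonneg (div_nonneg (by linarith) (by linarith)), zero_div]

lemma eq_of_exp_two_mul_I_mul_eq {x y : ℂ} (h : exp (2 * I * x) = exp (2 * I * y))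
    (hre : x.re = y.re) : x = y := by
  obtain ⟨n, hn⟩ := exp_eq_exp_iff_exists_int.mp h
  have hxy : x = y + n * Real.pi :=
    mul_left_cancel₀ (mul_ne_zero two_ne_zero I_ne_zero) (by linear_combination hn)
  have hn0 : n = 0 := by simpa [hre, Real.pi_ne_zero] using congrArg re hxy
  simpa [hn0] using hxy

lemma arctan_sub_arctan {u v : ℂ} (hu₁ : u ≠ I) (hu₂ : u ≠ -I) (hv₁ : v ≠ I) (hv₂ : v ≠ -I)
    (huv : 1 + u * v ≠ 0) (hw₁ : (u - v) / (1 + u * v) ≠ I) (hw₂ : (u - v) / (1 + u * v) ≠ -I)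
    (hre : (arctan u).re - (arctan v).re = (arctan ((u - v) / (1 + u * v))).re) :
    arctan u - arctan v = arctan ((u - v) / (1 + u * v)) := by
  refine eq_of_exp_two_mul_I_mul_eq ?_ (by rw [sub_re, hre])
  have := one_add_mul_I_ne_zero hu₁
  have := one_sub_mul_I_ne_zero hu₂
  have := one_add_mul_I_ne_zero hv₁
  have := one_sub_mul_I_ne_zero hv₂
  have := one_add_mul_I_ne_zero hw₁
  have := one_sub_mul_I_ne_zero hw₂
  rw [mul_sub, exp_sub, exp_two_mul_I_mul_arctan hu₁ hu₂, exp_two_mul_I_mul_arctan hv₁ hv₂,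
    exp_two_mul_I_mul_arctan hw₁ hw₂, div_div_div_eq,
    div_eq_div_iff (by positivity) (by assumption)]
  field_simp
  linear_combination (2 * u ^ 2 * v * I - 2 * u * v ^ 2 * I) * I_sq

lemma ne_I_and_ne_neg_I_of_re_ne_zero {z : ℂ} (h : z.re ≠ 0) : z ≠ I ∧ z ≠ -I :=
  ⟨fun h' ↦ h (by simp [h']), fun h' ↦ h (by simp [h'])⟩

lemma ne_I_and_ne_neg_I_of_abs_im_lt_one {z : ℂ} (h : |z.im| < 1) : z ≠ I ∧ z ≠ -I :=
  ⟨fun h' ↦ by simp [h'] at h, fun h' ↦ by simp [h'] at h⟩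

lemma exp_add_mul_I_sub_exp_sub_mul_I (a b : ℝ) :
    exp (a + b * I) - exp (a - b * I) = 2 * I * exp a * Real.sin b := by
  rw [ofReal_sin, sin, exp_add, exp_sub, neg_mul, exp_neg]
  field_simp
  linear_combination (exp (b * I) ^ 2 - 1) * I_sq

lemma one_add_exp_add_mul_I_mul_exp_sub_mul_I (a b : ℝ) :
    1 + exp (a + b * I) * exp (a - b * I) = 2 * exp a * Real.cosh a := by
  rw [ofReal_cosh, cosh, exp_add, exp_sub, exp_neg]
  field_simp
  ring

lemma arctan_exp_sub_arctan_exp {a b : ℝ} (hb : Real.cos b ≠ 0) :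
    arctan (exp (a + b * I)) - arctan (exp (a - b * I))
      = arctan (I * Real.sin b / Real.cosh a) := by
  set u := exp (a + b * I)
  have hv : exp (a - b * I) = conj u := by rw [← exp_conj]; simp [sub_eq_add_neg]
  have hu : u.re ≠ 0 := by simp [u, exp_re, hb]
  have hw : I * Real.sin b / Real.cosh a = ((Real.sin b / Real.cosh a : ℝ) : ℂ) * I := by
    push_cast; ring
  obtain ⟨hu₁, hu₂⟩ := ne_I_and_ne_neg_I_of_re_ne_zero hu
  obtain ⟨hv₁, hv₂⟩ :=
    ne_I_and_ne_neg_I_of_re_ne_zero (z := exp (a - b * I)) (by rwa [hv, conj_re])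
  obtain ⟨hw₁, hw₂⟩ := ne_I_and_ne_neg_I_of_abs_im_lt_one (z := I * Real.sin b / Real.cosh a)
    (by rw [hw, mul_I_im, ofReal_re]; exact abs_sin_div_cosh_lt_one hb)
  have huv : 1 + u * exp (a - b * I) ≠ 0 := by
    rw [one_add_exp_add_mul_I_mul_exp_sub_mul_I]
    exact mul_ne_zero (mul_ne_zero two_ne_zero (exp_ne_zero _))
      (ofReal_ne_zero.2 (Real.cosh_pos a).ne')
  have hquot :
      (u - exp (a - b * I)) / (1 + u * exp (a - b * I)) = I * Real.sin b / Real.cosh a := by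
    rw [exp_add_mul_I_sub_exp_sub_mul_I, one_add_exp_add_mul_I_mul_exp_sub_mul_I]
    field_simp
  rw [← hquot] at hw₁ hw₂ ⊢
  refine arctan_sub_arctan hu₁ hu₂ hv₁ hv₂ huv hw₁ hw₂ ?_
  rw [hquot, hw, re_arctan_ofReal_mul_I (abs_sin_div_cosh_lt_one hb), hv, re_arctan_conj,
    sub_self]

end Complex

lemma div_mul_one_add_sq_div_one_add_mul_sq (a b c s k : ℝ) (ℓ : ℂ) (hc : c ≠ 0)
    (hℓ : (a : ℂ) ^ 2 * c ^ 2 + ℓ ^ 2 * b ^ 2 * s ^ 2 ≠ 0) :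
    4 * a ^ 2 * b * k * c / (a ^ 2 * c ^ 2 + b ^ 2 * s ^ 2) * (1 + (b * s / (a * c)) ^ 2)
        / (1 + ℓ ^ 2 * (b * s / (a * c)) ^ 2 : ℂ)
      = 4 * a ^ 2 * b * k * c / (a ^ 2 * c ^ 2 + ℓ ^ 2 * b ^ 2 * s ^ 2) := by
  -- for `a = 0` both sides vanish, the left one through `b * s / 0 = 0`
  rcases eq_or_ne a 0 with rfl | ha
  · simp
  have hD : (a : ℂ) ^ 2 * c ^ 2 + b ^ 2 * s ^ 2 ≠ 0 := by
    exact_mod_cast (by positivity : 0 < a ^ 2 * c ^ 2 + b ^ 2 * s ^ 2).ne'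
  have haC : (a : ℂ) ≠ 0 := ofReal_ne_zero.2 ha
  have hcC : (c : ℂ) ≠ 0 := ofReal_ne_zero.2 hc
  have hone_add (m : ℂ) : 1 + m ^ 2 * (b * s / (a * c)) ^ 2
      = (a ^ 2 * c ^ 2 + m ^ 2 * b ^ 2 * s ^ 2) / (a ^ 2 * c ^ 2) := by
    field_simp
  have hone := hone_add 1
  rw [one_pow, one_mul, one_mul] at hone
  rw [hone, hone_add]
  field_simp

theorem permutability_auxiliary_identities_general (β x₁ x₂ : ℝ) (α : ℝ)
    (hx₁ : ∀ k : ℤ, x₁ ≠ (Real.pi / α) * (1 / 2 + (k : ℝ)))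
    (B Bt : ℝ → ℝ)
    (hB : ∀ x : ℝ, B x
      = 4 * Real.arctan (β * Real.sin (α * x₁) / (α * Real.cosh (β * (x + x₂)))))
    (hBt : ∀ x : ℝ, Bt x
      = 4 * α ^ 2 * β * Real.cos (α * x₁) * Real.cosh (β * (x + x₂))
          / (α ^ 2 * (Real.cosh (β * (x + x₂))) ^ 2 + β ^ 2 * (Real.sin (α * x₁)) ^ 2))
    (K Kbar : ℝ → ℂ)
    (hK : ∀ x : ℝ, K x = 4 * Complex.arctan (Complex.exp
      ((β : ℂ) * ((x : ℂ) + (x₂ : ℂ)) + Complex.I * (α : ℂ) * (x₁ : ℂ))))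
    (hKbar : ∀ x : ℝ, Kbar x = 4 * Complex.arctan (Complex.exp
      ((β : ℂ) * ((x : ℂ) + (x₂ : ℂ)) - Complex.I * (α : ℂ) * (x₁ : ℂ)))) :
    -- (i)
    (∀ x : ℝ, K x - Kbar x
      = 4 * Complex.arctan (Complex.I * ((Real.sin (α * x₁) : ℝ) : ℂ)
          / ((Real.cosh (β * (x + x₂)) : ℝ) : ℂ))) ∧
    -- (ii) real trigonometric identities
    (∀ x : ℝ, 1 / (Real.cos (B x / 4)) ^ 2
      = 1 + (β * Real.sin (α * x₁) / (α * Real.cosh (β * (x + x₂)))) ^ 2) ∧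
    (∀ x : ℝ, (Real.tan (B x / 4)) ^ 2
      = (β * Real.sin (α * x₁) / (α * Real.cosh (β * (x + x₂)))) ^ 2) ∧
    -- and, for every ℓ ∈ ℂ with nonvanishing denominator
    (∀ (ℓ : ℂ) (x : ℝ),
      (α : ℂ) ^ 2 * ((Real.cosh (β * (x + x₂)) : ℝ) : ℂ) ^ 2
        + ℓ ^ 2 * (β : ℂ) ^ 2 * ((Real.sin (α * x₁) : ℝ) : ℂ) ^ 2 ≠ 0 →
      (Bt x : ℂ) * (1 / ((Real.cos (B x / 4) : ℝ) : ℂ) ^ 2)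
          / (1 + ℓ ^ 2 * ((Real.tan (B x / 4) : ℝ) : ℂ) ^ 2)
        = 4 * (α : ℂ) ^ 2 * (β : ℂ) * ((Real.cos (α * x₁) : ℝ) : ℂ)
            * ((Real.cosh (β * (x + x₂)) : ℝ) : ℂ)
          / ((α : ℂ) ^ 2 * ((Real.cosh (β * (x + x₂)) : ℝ) : ℂ) ^ 2
              + ℓ ^ 2 * (β : ℂ) ^ 2 * ((Real.sin (α * x₁) : ℝ) : ℂ) ^ 2)) := by
  have hB4 (x : ℝ) : B x / 4
      = Real.arctan (β * Real.sin (α * x₁) / (α * Real.cosh (β * (x + x₂)))) := by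
    rw [hB x]; ring
  have hsec (x : ℝ) : 1 / Real.cos (B x / 4) ^ 2
      = 1 + (β * Real.sin (α * x₁) / (α * Real.cosh (β * (x + x₂)))) ^ 2 := by
    rw [hB4, Real.cos_sq_arctan, one_div_one_div]
  have htan (x : ℝ) : Real.tan (B x / 4) ^ 2
      = (β * Real.sin (α * x₁) / (α * Real.cosh (β * (x + x₂)))) ^ 2 := by
    rw [hB4, Real.tan_arctan]
  refine ⟨fun x ↦ ?_, hsec, htan, fun ℓ x hℓ ↦ ?_⟩
  · have hplus : (β : ℂ) * (x + x₂) + I * α * x₁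
        = ((β * (x + x₂) : ℝ) : ℂ) + ((α * x₁ : ℝ) : ℂ) * I := by
      push_cast; ring
    have hminus : (β : ℂ) * (x + x₂) - I * α * x₁
        = ((β * (x + x₂) : ℝ) : ℂ) - ((α * x₁ : ℝ) : ℂ) * I := by
      push_cast; ring
    rw [hK, hKbar, hplus, hminus, ← mul_sub,
      arctan_exp_sub_arctan_exp (cos_mul_ne_zero_of_forall_ne hx₁)]
  · rw [hBt x, ← ofReal_pow, ← ofReal_pow, htan x, ← ofReal_one, ← ofReal_div, hsec x]
    simp only [ofReal_mul, ofReal_div, ofReal_add, ofReal_pow, ofReal_one, ofReal_ofNat]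
    exact div_mul_one_add_sq_div_one_add_mul_sq _ _ _ _ _ ℓ (Real.cosh_pos _).ne' hℓ

/-- **Auxiliary identities for the permutability argument (Lemma 8.2).**
With `0 < |β| < 1`, `α = √(1−β²)` and `x₁` nondegenerate:
(i) `K − K̄ = 4 arctan(i sin(αx₁)/cosh(β(x+x₂)))`;
(ii) `sec²(B/4) = 1 + (β sin(αx₁)/(α cosh(β(x+x₂))))²`,
`tan²(B/4) = (β sin(αx₁)/(α cosh(β(x+x₂))))²`, and for any `ℓ ∈ ℂ` with nonvanishing
denominator, `Bₜ sec²(B/4)/(1+ℓ²tan²(B/4))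
  = 4α²β cos(αx₁)cosh(β(x+x₂))/(α²cosh²(β(x+x₂))+ℓ²β²sin²(αx₁))`. -/
theorem permutability_auxiliary_identities (β x₁ x₂ : ℝ)
    (hβ0 : 0 < |β|) (hβ1 : |β| < 1)
    (α : ℝ) (hα : α = Real.sqrt (1 - β ^ 2))
    (hx₁ : ∀ k : ℤ, x₁ ≠ (Real.pi / α) * (1 / 2 + (k : ℝ)))
    (B Bt : ℝ → ℝ)
    (hB : ∀ x : ℝ, B x
      = 4 * Real.arctan (β * Real.sin (α * x₁) / (α * Real.cosh (β * (x + x₂)))))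
    (hBt : ∀ x : ℝ, Bt x
      = 4 * α ^ 2 * β * Real.cos (α * x₁) * Real.cosh (β * (x + x₂))
          / (α ^ 2 * (Real.cosh (β * (x + x₂))) ^ 2 + β ^ 2 * (Real.sin (α * x₁)) ^ 2))
    (K Kbar : ℝ → ℂ)
    (hK : ∀ x : ℝ, K x = 4 * Complex.arctan (Complex.exp
      ((β : ℂ) * ((x : ℂ) + (x₂ : ℂ)) + Complex.I * (α : ℂ) * (x₁ : ℂ))))
    (hKbar : ∀ x : ℝ, Kbar x = 4 * Complex.arctan (Complex.exp
      ((β : ℂ) * ((x : ℂ) + (x₂ : ℂ)) - Complex.I * (α : ℂ) * (x₁ : ℂ)))) :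
    -- (i)
    (∀ x : ℝ, K x - Kbar x
      = 4 * Complex.arctan (Complex.I * ((Real.sin (α * x₁) : ℝ) : ℂ)
          / ((Real.cosh (β * (x + x₂)) : ℝ) : ℂ))) ∧
    -- (ii) real trigonometric identities
    (∀ x : ℝ, 1 / (Real.cos (B x / 4)) ^ 2
      = 1 + (β * Real.sin (α * x₁) / (α * Real.cosh (β * (x + x₂)))) ^ 2) ∧
    (∀ x : ℝ, (Real.tan (B x / 4)) ^ 2
      = (β * Real.sin (α * x₁) / (α * Real.cosh (β * (x + x₂)))) ^ 2) ∧
    -- and, for every ℓ ∈ ℂ with nonvanishing denominator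
    (∀ (ℓ : ℂ) (x : ℝ),
      (α : ℂ) ^ 2 * ((Real.cosh (β * (x + x₂)) : ℝ) : ℂ) ^ 2
        + ℓ ^ 2 * (β : ℂ) ^ 2 * ((Real.sin (α * x₁) : ℝ) : ℂ) ^ 2 ≠ 0 →
      (Bt x : ℂ) * (1 / ((Real.cos (B x / 4) : ℝ) : ℂ) ^ 2)
          / (1 + ℓ ^ 2 * ((Real.tan (B x / 4) : ℝ) : ℂ) ^ 2)
        = 4 * (α : ℂ) ^ 2 * (β : ℂ) * ((Real.cos (α * x₁) : ℝ) : ℂ)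
            * ((Real.cosh (β * (x + x₂)) : ℝ) : ℂ)
          / ((α : ℂ) ^ 2 * ((Real.cosh (β * (x + x₂)) : ℝ) : ℂ) ^ 2
              + ℓ ^ 2 * (β : ℂ) ^ 2 * ((Real.sin (α * x₁) : ℝ) : ℂ) ^ 2)) :=
  permutability_auxiliary_identities_general β x₁ x₂ α hx₁ B Bt hB hBt K Kbar hK hKbar
end
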